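/- For smooth functions f > 0 and g, the adjoint identity 𝓛†[f](f⁻³ g) = f⁻³ 𝓛[f] g holds pointwise, where 𝓛[f]g = (c - 2f - k²c f'')g + 2k²c f' g' - k²c f g'' and 𝓛†[f]h = (c - 2f - k²c f'')h - 2k²c (f' h)' - k²c (f h)''. -/

import Mathlib

open Real

theorem stmt_13 (c k : ℝ) (f g : ℝ → ℝ) (hf : ContDiff ℝ (⊤ : ℕ∞) f) (hg : ContDiff ℝ (⊤ : ℕ∞) g)
    (hfpos : ∀ z, 0 < f z) :
    ∀ z : ℝ,
      (c - 2 * f z - k^2 * c * deriv (deriv f) z) * ((f z)⁻¹^3 * g z)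
        - 2 * k^2 * c * deriv (fun z => deriv f z * ((f z)⁻¹^3 * g z)) z
        - k^2 * c * deriv (deriv (fun z => f z * ((f z)⁻¹^3 * g z))) z
      = (f z)⁻¹^3 *
        ((c - 2 * f z - k^2 * c * deriv (deriv f) z) * g z
          + 2 * k^2 * c * deriv f z * deriv g z
          - k^2 * c * f z * deriv (deriv g) z) := by
  have hne : ∀ x, f x ≠ 0 := fun x => (hfpos x).ne'
  have hfd : Differentiable ℝ f := hf.differentiable (by simp)
  have hf1 : ContDiff ℝ (↑(⊤:ℕ∞)) (deriv f) :=
    (contDiff_infty_iff_deriv.mp (hf.of_le (by simp))).2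
  have hf1d : Differentiable ℝ (deriv f) := hf1.differentiable (by simp)
  have hgd : Differentiable ℝ g := hg.differentiable (by simp)
  have hg1 : ContDiff ℝ (↑(⊤:ℕ∞)) (deriv g) :=
    (contDiff_infty_iff_deriv.mp (hg.of_le (by simp))).2
  have hg1d : Differentiable ℝ (deriv g) := hg1.differentiable (by simp)
  -- derivative of f⁻¹ power times g
  have hinv : ∀ x, HasDerivAt (fun z => (f z)⁻¹) (-(deriv f x) / (f x)^2) x :=
    fun x => ((hfd x).hasDerivAt).inv (hne x)
  have hP : ∀ x, HasDerivAt (fun z => (f z)⁻¹^3 * g z)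
      ((3 * (f x)⁻¹^2 * (-(deriv f x) / (f x)^2)) * g x + (f x)⁻¹^3 * deriv g x) x := by
    intro x
    have h1 : HasDerivAt (fun z => (f z)⁻¹^3)
        (3 * (f x)⁻¹^2 * (-(deriv f x) / (f x)^2)) x := by
      have := (hinv x).fun_pow 3
      simpa using this
    exact h1.mul (hgd x).hasDerivAt
  have hQ : ∀ x, HasDerivAt (fun z => (f z)⁻¹^2 * g z)
      ((2 * (f x)⁻¹ * (-(deriv f x) / (f x)^2)) * g x + (f x)⁻¹^2 * deriv g x) x := by
    intro x
    have h1 : HasDerivAt (fun z => (f z)⁻¹^2)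
        (2 * (f x)⁻¹ * (-(deriv f x) / (f x)^2)) x := by
      have := (hinv x).fun_pow 2
      simpa using this
    exact h1.mul (hgd x).hasDerivAt
  intro z
  -- first deriv term
  have hT1 : deriv (fun z => deriv f z * ((f z)⁻¹^3 * g z)) z
      = deriv (deriv f) z * ((f z)⁻¹^3 * g z)
        + deriv f z * ((3 * (f z)⁻¹^2 * (-(deriv f z) / (f z)^2)) * g z + (f z)⁻¹^3 * deriv g z) :=
    (((hf1d z).hasDerivAt).mul (hP z)).deriv
  -- second term: rewrite f * (f⁻¹^3 g) = f⁻¹^2 g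
  have hfun : (fun z => f z * ((f z)⁻¹^3 * g z)) = (fun z => (f z)⁻¹^2 * g z) := by
    funext x
    field_simp [hne x]
  have hQd : deriv (fun z => (f z)⁻¹^2 * g z)
      = fun x => (2 * (f x)⁻¹ * (-(deriv f x) / (f x)^2)) * g x + (f x)⁻¹^2 * deriv g x := by
    funext x; exact (hQ x).deriv
  have hT2 : deriv (deriv (fun z => f z * ((f z)⁻¹^3 * g z))) z
      = deriv (fun x => (2 * (f x)⁻¹ * (-(deriv f x) / (f x)^2)) * g x + (f x)⁻¹^2 * deriv g x) z := by
    rw [hfun, hQd]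
  -- compute the derivative of that expression
  have hD2 : HasDerivAt
      (fun x => (2 * (f x)⁻¹ * (-(deriv f x) / (f x)^2)) * g x + (f x)⁻¹^2 * deriv g x)
      ((2 * (-(deriv f z) / (f z)^2) * (-(deriv f z) / (f z)^2)
          + 2 * (f z)⁻¹ * ((-(deriv (deriv f) z) * (f z)^2 - (-(deriv f z)) * (2 * f z * deriv f z)) / ((f z)^2)^2)) * g z
        + (2 * (f z)⁻¹ * (-(deriv f z) / (f z)^2)) * deriv g z
        + ((2 * (f z)⁻¹ * (-(deriv f z) / (f z)^2)) * deriv g z + (f z)⁻¹^2 * deriv (deriv g) z)) z := by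
    have hnum : HasDerivAt (fun x => -(deriv f x)) (-(deriv (deriv f) z)) z :=
      ((hf1d z).hasDerivAt).neg
    have hden : HasDerivAt (fun x => (f x)^2) (2 * f z * deriv f z) z := by
      have := ((hfd z).hasDerivAt).fun_pow 2
      simpa [mul_comm, mul_assoc] using this
    have hfrac : HasDerivAt (fun x => -(deriv f x) / (f x)^2)
        ((-(deriv (deriv f) z) * (f z)^2 - (-(deriv f z)) * (2 * f z * deriv f z)) / ((f z)^2)^2) z :=
      hnum.div hden (pow_ne_zero 2 (hne z))
    have hinv2 : HasDerivAt (fun x => 2 * (f x)⁻¹) (2 * (-(deriv f z) / (f z)^2)) z :=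
      (hinv z).const_mul 2
    have hA : HasDerivAt (fun x => 2 * (f x)⁻¹ * (-(deriv f x) / (f x)^2))
        (2 * (-(deriv f z) / (f z)^2) * (-(deriv f z) / (f z)^2)
          + 2 * (f z)⁻¹ * ((-(deriv (deriv f) z) * (f z)^2 - (-(deriv f z)) * (2 * f z * deriv f z)) / ((f z)^2)^2)) z :=
      hinv2.mul hfrac
    have hB : HasDerivAt (fun x => 2 * (f x)⁻¹ * (-(deriv f x) / (f x)^2) * g x)
        ((2 * (-(deriv f z) / (f z)^2) * (-(deriv f z) / (f z)^2)
          + 2 * (f z)⁻¹ * ((-(deriv (deriv f) z) * (f z)^2 - (-(deriv f z)) * (2 * f z * deriv f z)) / ((f z)^2)^2)) * g z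
          + (2 * (f z)⁻¹ * (-(deriv f z) / (f z)^2)) * deriv g z) z :=
      hA.mul (hgd z).hasDerivAt
    have hinvsq : HasDerivAt (fun x => (f x)⁻¹^2) (2 * (f z)⁻¹ * (-(deriv f z) / (f z)^2)) z := by
      have := (hinv z).fun_pow 2
      simpa using this
    have hC : HasDerivAt (fun x => (f x)⁻¹^2 * deriv g x)
        ((2 * (f z)⁻¹ * (-(deriv f z) / (f z)^2)) * deriv g z + (f z)⁻¹^2 * deriv (deriv g) z) z :=
      hinvsq.mul (hg1d z).hasDerivAt
    exact hB.add hC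
  rw [hT1, hT2, hD2.deriv]
  have hz := hne z
  field_simp
  ring
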